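/- Let A = [[0,1,0],[1,0,0],[0,0,0]] and Φ the Oseen tensor. Then for x ≠ 0, curl(∇Φ(x):A) = −(3/(4π))·(Ax ∧ x)/|x|⁵, where (∇Φ(x):A)_i = ∂_k Φ_{ji}(x) A_{jk}. -/

import Mathlib

open MeasureTheory Real
open scoped BigOperators

noncomputable section

abbrev E3 := EuclideanSpace ℝ (Fin 3)

def pd (k : Fin 3) (f : E3 → ℝ) (x : E3) : ℝ :=
  fderiv ℝ f x (EuclideanSpace.single k 1)

/-- The Oseen tensor. -/
def Phi (x : E3) : Matrix (Fin 3) (Fin 3) ℝ :=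
  (1 / (8 * π)) • (‖x‖⁻¹ • (1 : Matrix (Fin 3) (Fin 3) ℝ)
    + (‖x‖ ^ 3)⁻¹ • Matrix.vecMulVec (fun i => x i) (fun i => x i))

/-- The vector field `x ↦ ∇Φ(x):A`, with `(∇Φ(x):A)_i = ∂_k Φ_{ji}(x) A_{jk}`. -/
def gradPhiA (A : Matrix (Fin 3) (Fin 3) ℝ) (x : E3) : Fin 3 → ℝ :=
  fun i => ∑ j : Fin 3, ∑ k : Fin 3, pd k (fun y => Phi y j i) x * A j k

/-- Cross product in ℝ³. -/
def cross (a b : Fin 3 → ℝ) : Fin 3 → ℝ :=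
  ![a 1 * b 2 - a 2 * b 1, a 2 * b 0 - a 0 * b 2, a 0 * b 1 - a 1 * b 0]

/-- Curl of a vector field on ℝ³. -/
def curl3 (u : E3 → Fin 3 → ℝ) (x : E3) : Fin 3 → ℝ :=
  ![pd 1 (fun y => u y 2) x - pd 2 (fun y => u y 1) x,
    pd 2 (fun y => u y 0) x - pd 0 (fun y => u y 2) x,
    pd 0 (fun y => u y 1) x - pd 1 (fun y => u y 0) x]

/-!
Differentiating the Oseen tensor gives
`8π ∂ₖΦⱼᵢ = (δⱼₖ xᵢ + δᵢₖ xⱼ - δᵢⱼ xₖ)/|x|³ - 3 xᵢ xⱼ xₖ/|x|⁵`, and contracting with a symmetric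
traceless `A` kills the `|x|⁻³` terms, so `∇Φ:A = g x` is radial with
`g = -(3/(8π)) (x·Ax)/|x|⁵`. For a radial field `curl (g x) = ∇g ∧ x`, and
`∇g = -(3/(8π)) (2Ax/|x|⁵ - 5 (x·Ax) x/|x|⁷)`, whose component along `x` drops out of the cross
product.
-/

open Matrix Filter Topology

section NormPow

variable {F : Type*} [NormedAddCommGroup F] [InnerProductSpace ℝ F] {x : F}

theorem hasFDerivAt_norm_of_ne_zero (hx : x ≠ 0) :
    HasFDerivAt (fun y : F => ‖y‖) (‖x‖⁻¹ • innerSL ℝ x) x := by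
  have hsq : ‖x‖ ^ 2 ≠ 0 := by positivity
  have h := (Real.hasDerivAt_sqrt hsq).comp_hasFDerivAt x (hasStrictFDerivAt_norm_sq x).hasFDerivAt
  simp only [Function.comp_def, Real.sqrt_sq (norm_nonneg _)] at h
  refine h.congr_fderiv ?_
  ext v
  simp only [_root_.smul_apply, coe_innerSL_apply, nsmul_eq_mul, Nat.cast_ofNat, smul_eq_mul]
  field_simp

theorem hasFDerivAt_inv_norm_pow (hx : x ≠ 0) (n : ℕ) :
    HasFDerivAt (fun y : F => (‖y‖ ^ n)⁻¹) ((-(n : ℝ) / ‖x‖ ^ (n + 2)) • innerSL ℝ x) x := by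
  have hn : ‖x‖ ≠ 0 := norm_ne_zero_iff.2 hx
  have h := ((hasDerivAt_pow n ‖x‖).inv (pow_ne_zero n hn)).comp_hasFDerivAt x
    (hasFDerivAt_norm_of_ne_zero hx)
  refine h.congr_fderiv ?_
  rw [smul_smul]
  congr 1
  rcases n with _ | n
  · simp
  · simp only [Nat.add_sub_cancel]
    field_simp
    ring

end NormPow

section PartialDerivatives

variable {f g : E3 → ℝ} {x : E3}

theorem HasFDerivAt.pd_eq {f' : E3 →L[ℝ] ℝ} (h : HasFDerivAt f f' x) (k : Fin 3) :
    pd k f x = f' (EuclideanSpace.single k 1) := by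
  rw [pd, h.fderiv]

theorem hasFDerivAt_coord (i : Fin 3) :
    HasFDerivAt (fun y : E3 => y i) (EuclideanSpace.proj (𝕜 := ℝ) i) x := by
  exact (EuclideanSpace.proj (𝕜 := ℝ) i).hasFDerivAt

theorem pd_congr (k : Fin 3) (h : f =ᶠ[𝓝 x] g) : pd k f x = pd k g x := by
  rw [pd, pd, h.fderiv_eq]

theorem pd_coord (k i : Fin 3) : pd k (fun y : E3 => y i) x = if k = i then 1 else 0 := by
  simp [(hasFDerivAt_coord i).pd_eq, PiLp.single_apply, eq_comm]

theorem pd_const_mul (c : ℝ) (k : Fin 3) :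
    pd k (fun y => c * f y) x = c * pd k f x := by
  change fderiv ℝ (c • f) x _ = _
  rw [fderiv_const_smul_field]
  rfl

theorem pd_mul (hf : DifferentiableAt ℝ f x) (hg : DifferentiableAt ℝ g x) (k : Fin 3) :
    pd k (fun y => f y * g y) x = pd k f x * g x + f x * pd k g x := by
  rw [(hf.hasFDerivAt.fun_mul hg.hasFDerivAt).pd_eq]
  simp only [pd, _root_.add_apply, _root_.smul_apply, smul_eq_mul]
  ring

theorem curl3_congr {u v : E3 → Fin 3 → ℝ} (h : u =ᶠ[𝓝 x] v) : curl3 u x = curl3 v x := by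
  have hi (i : Fin 3) : (fun y => u y i) =ᶠ[𝓝 x] fun y => v y i :=
    h.mono fun y hy => congrFun hy i
  simp only [curl3, pd_congr _ (hi _)]

theorem cross_eq_crossProduct (a b : Fin 3 → ℝ) : cross a b = a ⨯₃ b :=
  (cross_apply a b).symm

theorem curl3_smul_self (hg : DifferentiableAt ℝ g x) :
    curl3 (fun y => g y • ⇑y) x = cross (fun k => pd k g x) ⇑x := by
  have hpd (k i : Fin 3) :
      pd k (fun y => g y * y i) x = pd k g x * x i + g x * if k = i then 1 else 0 := by
    rw [pd_mul hg (hasFDerivAt_coord i).differentiableAt, pd_coord]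
  ext l
  fin_cases l <;> simp [curl3, cross, hpd]

end PartialDerivatives

section QuadraticForm

variable {ι : Type*} [Fintype ι] [DecidableEq ι] (A : Matrix ι ι ℝ)

theorem hasFDerivAt_dotProduct_mulVec (x : EuclideanSpace ℝ ι) :
    HasFDerivAt (fun y : EuclideanSpace ℝ ι => ⇑y ⬝ᵥ A *ᵥ ⇑y)
      (innerSL ℝ (WithLp.toLp 2 ((A + Aᵀ) *ᵥ ⇑x))) x := by
  simp only [← inner_toEuclideanCLM]
  refine ((hasFDerivAt_id x).inner ℝ (toEuclideanCLM (𝕜 := ℝ) A).hasFDerivAt).congr_fderiv ?_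
  ext v
  simp [EuclideanSpace.inner_eq_star_dotProduct, add_mulVec, dotProduct_mulVec, vecMul_transpose,
    dotProduct_comm (A *ᵥ ⇑x), add_comm]

theorem hasFDerivAt_dotProduct_mulVec_div_norm_pow {x : EuclideanSpace ℝ ι} (hx : x ≠ 0) (n : ℕ) :
    HasFDerivAt (fun y : EuclideanSpace ℝ ι => (⇑y ⬝ᵥ A *ᵥ ⇑y) / ‖y‖ ^ n)
      ((⇑x ⬝ᵥ A *ᵥ ⇑x) • (-(n : ℝ) / ‖x‖ ^ (n + 2)) • innerSL ℝ x
        + (‖x‖ ^ n)⁻¹ • innerSL ℝ (WithLp.toLp 2 ((A + Aᵀ) *ᵥ ⇑x))) x :=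
  ((hasFDerivAt_dotProduct_mulVec A x).fun_mul
    (hasFDerivAt_inv_norm_pow hx n)).congr_of_eventuallyEq (.of_forall fun _ => div_eq_mul_inv _ _)

end QuadraticForm

local notation "δ" => (1 : Matrix (Fin 3) (Fin 3) ℝ)

theorem pd_Phi {x : E3} (hx : x ≠ 0) (i j k : Fin 3) :
    pd k (fun y => Phi y j i) x = (1 / (8 * π)) *
      ((δ j k * x i + δ i k * x j - δ j i * x k) / ‖x‖ ^ 3 - 3 * x i * x j * x k / ‖x‖ ^ 5) := by
  have hPhi : (fun y => Phi y j i) = fun y : E3 =>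
      (1 / (8 * π)) * (δ j i * (‖y‖ ^ 1)⁻¹ + (‖y‖ ^ 3)⁻¹ * (y j * y i)) := by
    funext y
    simp only [Phi, Matrix.smul_apply, Matrix.add_apply, vecMulVec_apply, smul_eq_mul, pow_one]
    ring
  have H := (((hasFDerivAt_inv_norm_pow hx 1).const_mul (δ j i)).fun_add
    ((hasFDerivAt_inv_norm_pow hx 3).fun_mul
      ((hasFDerivAt_coord j).fun_mul (hasFDerivAt_coord i)))).const_mul (1 / (8 * π))
  rw [hPhi, H.pd_eq]
  simp only [_root_.smul_apply, _root_.add_apply, smul_eq_mul, coe_innerSL_apply, conj_trivial,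
    EuclideanSpace.inner_single_right, PiLp.proj_apply, PiLp.single_apply, ← one_apply]
  field_simp
  ring

theorem gradPhiA_apply (A : Matrix (Fin 3) (Fin 3) ℝ) {x : E3} (hx : x ≠ 0) (i : Fin 3) :
    gradPhiA A x i = (1 / (8 * π)) *
      ((A.trace * x i + (⇑x ᵥ* A) i - (A *ᵥ ⇑x) i) / ‖x‖ ^ 3
        - 3 * (⇑x ⬝ᵥ A *ᵥ ⇑x) * x i / ‖x‖ ^ 5) := by
  fin_cases i <;>
    simp only [gradPhiA, pd_Phi hx, Fin.sum_univ_three, one_apply, Fin.zero_eta, Fin.mk_one,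
      Fin.reduceFinMk, Fin.isValue, Fin.reduceEq, ↓reduceIte, trace, diag_apply, vecMul, mulVec,
      dotProduct] <;>
    ring

theorem gradPhiA_eq_smul {A : Matrix (Fin 3) (Fin 3) ℝ} (hA : A.IsSymm) (htr : A.trace = 0)
    {x : E3} (hx : x ≠ 0) :
    gradPhiA A x = (-(3 / (8 * π)) * ((⇑x ⬝ᵥ A *ᵥ ⇑x) / ‖x‖ ^ 5)) • ⇑x := by
  ext i
  rw [gradPhiA_apply A hx, Pi.smul_apply, smul_eq_mul, htr, ← mulVec_transpose, hA.eq]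
  ring

theorem curl3_gradPhiA {A : Matrix (Fin 3) (Fin 3) ℝ} (hA : A.IsSymm) (htr : A.trace = 0)
    {x : E3} (hx : x ≠ 0) :
    curl3 (gradPhiA A) x = (-(3 / (4 * π)) / ‖x‖ ^ 5) • cross (A *ᵥ ⇑x) ⇑x := by
  set c : ℝ := -(3 / (8 * π))
  have hq := hasFDerivAt_dotProduct_mulVec_div_norm_pow A hx 5
  have hgrad : (fun k => pd k (fun y : E3 => c * ((⇑y ⬝ᵥ A *ᵥ ⇑y) / ‖y‖ ^ 5)) x) =
      (2 * c / ‖x‖ ^ 5) • (A *ᵥ ⇑x) - (5 * c * (⇑x ⬝ᵥ A *ᵥ ⇑x) / ‖x‖ ^ 7) • ⇑x := by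
    ext k
    simp only [pd_const_mul, hq.pd_eq, hA.eq, Pi.sub_apply, Pi.smul_apply, _root_.add_apply,
      _root_.smul_apply, coe_innerSL_apply, EuclideanSpace.inner_single_right, conj_trivial,
      add_mulVec, Pi.add_apply, smul_eq_mul]
    ring
  calc curl3 (gradPhiA A) x
      = curl3 (fun y : E3 => (c * ((⇑y ⬝ᵥ A *ᵥ ⇑y) / ‖y‖ ^ 5)) • ⇑y) x :=
        curl3_congr (eventually_ne_nhds hx |>.mono fun y hy => gradPhiA_eq_smul hA htr hy)
    _ = cross ((2 * c / ‖x‖ ^ 5) • (A *ᵥ ⇑x) - (5 * c * (⇑x ⬝ᵥ A *ᵥ ⇑x) / ‖x‖ ^ 7) • ⇑x) ⇑x := by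
        rw [curl3_smul_self (hq.differentiableAt.const_mul c), hgrad]
    _ = (-(3 / (4 * π)) / ‖x‖ ^ 5) • cross (A *ᵥ ⇑x) ⇑x := by
        simp only [cross_eq_crossProduct, map_sub, map_smul, LinearMap.sub_apply,
          LinearMap.smul_apply, cross_self, smul_zero, sub_zero]
        congr 1
        ring

/-- for `A = [[0,1,0],[1,0,0],[0,0,0]]`,
`curl(∇Φ(x):A) = −(3/(4π)) (Ax ∧ x)/|x|⁵`. -/
theorem stmt1 (x : E3) (hx : x ≠ 0) :
    curl3 (gradPhiA !![0,1,0;1,0,0;0,0,0]) x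
      = (-(3 / (4 * π)) / ‖x‖ ^ 5) •
          cross ((!![0,1,0;1,0,0;0,0,0] : Matrix (Fin 3) (Fin 3) ℝ).mulVec fun i => x i)
            (fun i => x i) := by
  refine curl3_gradPhiA ?_ ?_ hx
  · ext i j
    fin_cases i <;> fin_cases j <;> rfl
  · simp [Matrix.trace, Fin.sum_univ_three]
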